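/- Let m^(1),...,m^(N) be finite distinct multisets over ℝ^d with cardinalities at most M, which are element-wise (r,δ)-separated with r ≥ 1 and 0 < δ ≤ 1. Then there exists a function φ: ℝ^d → {0,1,...,⌈4N³√π⌉} — nonzero on at most N distinct input values — such that the sums S_i = Σ_{k=1}^{|m^(i)|} φ(x_k^(i)) satisfy |S_i| ≤ 4MN³√π for all i, and |S_i − S_j| ≥ 1 whenever m^(i) ≠ m^(j). -/

import Mathlib

/-!
Choose a set `A` of at most `N` points on which the multisets stay pairwise distinct: adding the
multisets one at a time, if a new one agrees on `A` with an earlier, different one, add a point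
where these two differ; as the earlier multisets are already told apart by `A`, this single point
separates the new one from all of them.
Then weight the points of `A` by integers in `{0, …, N²}`. For a pair of multisets that differ on
`A`, the weightings giving equal sums are the zeros of a nonzero linear form, which is determined
by its other coordinates at a point where the coefficient is nonzero; so such weightings form a
`1/(N² + 1)` fraction of all weightings, and fewer than `N² + 1` pairs cannot exhaust them.
-/

open Real Finset

def Separates {X ι β : Type*} (A : Set X) (F : ι → X → β) (s : Set ι) : Prop :=
  ∀ i ∈ s, ∀ j ∈ s, Set.EqOn (F i) (F j) A → F i = F j

section Separates

variable {X ι β : Type*} {F : ι → X → β}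

theorem Separates.mono {A B : Set X} {s : Set ι} (h : Separates A F s) (hAB : A ⊆ B) :
    Separates B F s :=
  fun i hi j hj hij => h i hi j hj (hij.mono hAB)

theorem separates_insert {A : Set X} {s : Set ι} {i₀ : ι} :
    Separates A F (insert i₀ s) ↔
      Separates A F s ∧ ∀ j ∈ s, Set.EqOn (F i₀) (F j) A → F i₀ = F j := by
  refine ⟨fun h => ⟨fun i hi j hj => h i (.inr hi) j (.inr hj),
    fun j hj => h i₀ (.inl rfl) j (.inr hj)⟩, ?_⟩
  rintro ⟨hs, hi₀⟩ i (rfl | hi) j (rfl | hj) hij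
  · rfl
  · exact hi₀ j hj hij
  · exact (hi₀ i hi hij.symm).symm
  · exact hs i hi j hj hij

theorem exists_finset_separates_card_le (F : ι → X → β) (s : Finset ι) :
    ∃ A : Finset X, #A ≤ #s ∧ Separates (A : Set X) F s := by
  classical
  induction s using Finset.induction_on with
  | empty => exact ⟨∅, by simp, by simp [Separates]⟩
  | @insert i₀ s hi₀ ih =>
    obtain ⟨A, hAs, hA⟩ := ih
    rw [card_insert_of_notMem hi₀, coe_insert]
    by_cases h : ∀ j ∈ s, Set.EqOn (F i₀) (F j) A → F i₀ = F j
    · exact ⟨A, by omega, separates_insert.mpr ⟨hA, h⟩⟩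
    push Not at h
    obtain ⟨j, hj, hi₀j, hne⟩ := h
    obtain ⟨x, hx⟩ := Function.ne_iff.mp hne
    refine ⟨insert x A, (card_insert_le x A).trans (by omega),
      separates_insert.mpr ⟨hA.mono (by simp), fun k hk hi₀k => ?_⟩⟩
    -- `F j` and `F k` agree on `A`, hence coincide, but `F i₀` tells them apart at `x`
    have hjk : F j = F k := hA j hj k hk (hi₀j.symm.trans (hi₀k.mono (by simp)))
    exact absurd ((hi₀k (mem_insert_self x A)).trans (congrFun hjk x).symm) hx

end Separates

theorem card_filter_sum_mul_eq_zero_mul_le {α : Type*} [Fintype α] [DecidableEq α]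
    {c : α → ℤ} (hc : c ≠ 0) (K : ℕ) :
    #{w : α → Fin (K + 1) | ∑ a, c a * ((w a : ℕ) : ℤ) = 0} * (K + 1) ≤
      (K + 1) ^ Fintype.card α := by
  obtain ⟨a₀, ha₀⟩ : ∃ a, c a ≠ 0 := Function.ne_iff.mp hc
  set B := ({w : α → Fin (K + 1) | ∑ a, c a * ((w a : ℕ) : ℤ) = 0} : Finset _)
  have hdet : ∀ w ∈ B, ∀ w' ∈ B, (∀ a ≠ a₀, w a = w' a) → w = w' := by
    intro w hw w' hw' hoff
    have hdiff : ∑ a, c a * (((w a : ℕ) : ℤ) - ((w' a : ℕ) : ℤ)) = 0 := by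
      simp only [mul_sub, sum_sub_distrib, (mem_filter.mp hw).2, (mem_filter.mp hw').2, sub_self]
    rw [Fintype.sum_eq_single a₀ fun a ha => by simp [hoff a ha], mul_eq_zero] at hdiff
    have h₀ : w a₀ = w' a₀ := Fin.ext (by have := hdiff.resolve_left ha₀; omega)
    funext a
    by_cases ha : a = a₀
    · exact ha ▸ h₀
    · exact hoff a ha
  have hinj : Set.InjOn (fun p : (α → Fin (K + 1)) × Fin (K + 1) => Function.update p.1 a₀ p.2)
      (↑(B ×ˢ (univ : Finset (Fin (K + 1)))) : Set _) := by
    rintro ⟨w, v⟩ hw ⟨w', v'⟩ hw' h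
    simp only [coe_product, coe_univ, Set.mem_prod, mem_coe, Set.mem_univ, and_true] at hw hw'
    have hv : v = v' := by simpa using congrFun h a₀
    refine Prod.ext (hdet w hw w' hw' fun a ha => ?_) hv
    simpa [Function.update_of_ne ha] using congrFun h a
  calc #B * (K + 1) = #(B ×ˢ (univ : Finset (Fin (K + 1)))) := by simp
    _ ≤ #(univ : Finset (α → Fin (K + 1))) :=
      card_le_card_of_injOn _ (fun _ _ => mem_coe.mpr (mem_univ _)) hinj
    _ = (K + 1) ^ Fintype.card α := by simp

theorem exists_fin_weights_sum_mul_ne {ι α : Type*} [Fintype ι] [Fintype α] (F : ι → α → ℤ)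
    {K : ℕ} (hK : Fintype.card ι * Fintype.card ι ≤ K) :
    ∃ w : α → Fin (K + 1), ∀ i j, F i ≠ F j →
      ∑ a, F i a * ((w a : ℕ) : ℤ) ≠ ∑ a, F j a * ((w a : ℕ) : ℤ) := by
  classical
  by_contra! h
  let bad (p : ι × ι) : Finset (α → Fin (K + 1)) :=
    if F p.1 = F p.2 then ∅
    else ({w | ∑ a, (F p.1 a - F p.2 a) * ((w a : ℕ) : ℤ) = 0} : Finset _)
  have hcover : (univ : Finset (α → Fin (K + 1))) ⊆ univ.biUnion bad := by
    intro w _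
    obtain ⟨i, j, hne, heq⟩ := h w
    simp only [mem_biUnion, mem_univ, true_and]
    exact ⟨(i, j), by simp [bad, hne, sub_mul, heq]⟩
  have hbad : ∀ p, #(bad p) * (K + 1) ≤ (K + 1) ^ Fintype.card α := by
    intro p
    by_cases hp : F p.1 = F p.2
    · simp [bad, hp]
    · simpa [bad, hp] using card_filter_sum_mul_eq_zero_mul_le (sub_ne_zero.mpr hp) K
  have hpos : 0 < (K + 1) ^ Fintype.card α := by positivity
  have : (K + 1) ^ Fintype.card α * (K + 1) ≤ K * (K + 1) ^ Fintype.card α :=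
    calc (K + 1) ^ Fintype.card α * (K + 1)
        = #(univ : Finset (α → Fin (K + 1))) * (K + 1) := by simp
      _ ≤ (∑ p, #(bad p)) * (K + 1) :=
        Nat.mul_le_mul_right _ ((card_le_card hcover).trans card_biUnion_le)
      _ = ∑ p, #(bad p) * (K + 1) := sum_mul _ _ _
      _ ≤ ∑ _p : ι × ι, (K + 1) ^ Fintype.card α := sum_le_sum fun p _ => hbad p
      _ ≤ K * (K + 1) ^ Fintype.card α := by
        rw [sum_const, card_univ, Fintype.card_prod, smul_eq_mul]
        exact Nat.mul_le_mul_right _ hK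
  nlinarith

theorem sum_support_mul_eq_sum_of_eq_zero {X : Type*} (f : X →₀ ℕ) {φ : X → ℕ} {A : Finset X}
    (hφ : ∀ x ∉ A, φ x = 0) : ∑ x ∈ f.support, f x * φ x = ∑ x ∈ A, f x * φ x := by
  classical
  rw [← sum_subset inter_subset_left fun x hx hxA => by
      simp [hφ x fun h => hxA (mem_inter.2 ⟨hx, h⟩)],
    sum_subset inter_subset_right fun x _ hx => by simp_all]

theorem sum_support_mul_le {X : Type*} (f : X →₀ ℕ) {φ : X → ℕ} {K : ℕ} (hφ : ∀ x, φ x ≤ K) :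
    ∑ x ∈ f.support, f x * φ x ≤ (f.sum fun _ v => v) * K := by
  rw [Finsupp.sum, sum_mul]
  exact sum_le_sum fun x _ => Nat.mul_le_mul_left _ (hφ x)

theorem exists_weights_sum_ne_of_separates {X ι : Type*} [Fintype ι] (m : ι → X →₀ ℕ)
    {A : Finset X} (hA : Separates (A : Set X) (fun i => ⇑(m i)) Set.univ) {K : ℕ}
    (hK : Fintype.card ι * Fintype.card ι ≤ K) :
    ∃ φ : X → ℕ, (∀ x, φ x ≤ K) ∧ (∀ x ∉ A, φ x = 0) ∧ ∀ i j, m i ≠ m j →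
      ∑ x ∈ (m i).support, m i x * φ x ≠ ∑ x ∈ (m j).support, m j x * φ x := by
  classical
  obtain ⟨w, hw⟩ := exists_fin_weights_sum_mul_ne (fun i (a : A) => (m i a : ℤ)) hK
  set φ : X → ℕ := fun x => if h : x ∈ A then w ⟨x, h⟩ else 0
  have hφA : ∀ x ∉ A, φ x = 0 := fun x hx => dif_neg hx
  have hsum : ∀ i, ((∑ x ∈ (m i).support, m i x * φ x : ℕ) : ℤ) =
      ∑ a : A, (m i a : ℤ) * ((w a : ℕ) : ℤ) := by
    intro i
    rw [sum_support_mul_eq_sum_of_eq_zero _ hφA, ← sum_coe_sort]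
    push_cast
    refine sum_congr rfl fun a _ => ?_
    simp [φ]
  refine ⟨φ, fun x => ?_, hφA, fun i j hij heq => hw i j (fun h => hij ?_) ?_⟩
  · by_cases hx : x ∈ A
    · simpa [φ, hx] using (w ⟨x, hx⟩).is_le
    · simp [hφA x hx]
  · exact DFunLike.coe_injective <| hA i trivial j trivial fun a ha => by
      exact_mod_cast congrFun h ⟨a, ha⟩
  · rw [← hsum, ← hsum, heq]

theorem nat_mul_self_le_four_mul_pow_three_mul_sqrt_pi (N : ℕ) :
    ((N * N : ℕ) : ℝ) ≤ 4 * (N : ℝ) ^ 3 * √π := by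
  have hπ : 1 ≤ √π := Real.one_le_sqrt.mpr (by linarith [Real.pi_gt_three])
  rcases N.eq_zero_or_pos with rfl | hN
  · simp
  have hN' : (1 : ℝ) ≤ N := by exact_mod_cast hN
  push_cast
  calc (N : ℝ) * N ≤ 4 * N ^ 3 * 1 := by
        nlinarith [mul_le_mul_of_nonneg_left hN' (sq_nonneg (N : ℝ))]
    _ ≤ 4 * N ^ 3 * √π := by gcongr

theorem separation_of_multisets_general
    (d N M : ℕ)
    (m : Fin N → (EuclideanSpace ℝ (Fin d)) →₀ ℕ)
    (hcard : ∀ i, ((m i).sum fun _ v => v) ≤ M) :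
    ∃ φ : EuclideanSpace ℝ (Fin d) → ℕ,
      (∀ x, φ x ≤ ⌈4 * (N : ℝ) ^ 3 * Real.sqrt π⌉₊) ∧
      {x | φ x ≠ 0}.Finite ∧ {x | φ x ≠ 0}.ncard ≤ N ∧
      (∀ i, |∑ x ∈ (m i).support, (m i x : ℝ) * φ x|
          ≤ 4 * M * (N : ℝ) ^ 3 * Real.sqrt π) ∧
      (∀ i j, m i ≠ m j →
        1 ≤ |(∑ x ∈ (m i).support, (m i x : ℝ) * φ x)
              - (∑ x ∈ (m j).support, (m j x : ℝ) * φ x)|) := by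
  classical
  obtain ⟨A, hAN, hA⟩ := exists_finset_separates_card_le (fun i => ⇑(m i)) univ
  obtain ⟨φ, hφK, hφA, hφ⟩ :=
    exists_weights_sum_ne_of_separates m (by simpa using hA) (K := N * N) (by simp)
  have hK := nat_mul_self_le_four_mul_pow_three_mul_sqrt_pi N
  have hsupp : {x | φ x ≠ 0} ⊆ A := fun x hx => by_contra fun hxA => hx (hφA x hxA)
  have hcast : ∀ i, ∑ x ∈ (m i).support, (m i x : ℝ) * φ x =
      ((∑ x ∈ (m i).support, m i x * φ x : ℕ) : ℝ) := by
    intro i; push_cast; rfl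
  refine ⟨φ, fun x => (hφK x).trans (Nat.cast_le.mp (hK.trans (Nat.le_ceil _))),
    A.finite_toSet.subset hsupp, ?_, fun i => ?_, fun i j hij => ?_⟩
  · simpa using (Set.ncard_le_ncard hsupp A.finite_toSet).trans (by simpa using hAN)
  · have hle : ∑ x ∈ (m i).support, m i x * φ x ≤ M * (N * N) :=
      (sum_support_mul_le _ hφK).trans (Nat.mul_le_mul_right _ (hcard i))
    rw [hcast, abs_of_nonneg (by positivity)]
    calc ((∑ x ∈ (m i).support, m i x * φ x : ℕ) : ℝ) ≤ M * ((N * N : ℕ) : ℝ) := by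
          exact_mod_cast hle
      _ ≤ M * (4 * (N : ℝ) ^ 3 * √π) := by gcongr
      _ = 4 * M * (N : ℝ) ^ 3 * √π := by ring
  · rw [hcast, hcast]
    have hne : ((∑ x ∈ (m i).support, m i x * φ x : ℕ) : ℤ) -
        ∑ x ∈ (m j).support, m j x * φ x ≠ 0 := sub_ne_zero.mpr (by exact_mod_cast hφ i j hij)
    exact_mod_cast Int.one_le_abs hne

/-- for N distinct finite multisets over ℝ^d with cardinalities ≤ M that are
element-wise (r,δ)-separated (r ≥ 1, 0 < δ ≤ 1), there is a function
φ : ℝ^d → {0,…,⌈4N³√π⌉}, nonzero on at most N values, whose multiset sums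
S_i = Σ_x m^(i)(x)·φ(x) satisfy |S_i| ≤ 4MN³√π and |S_i − S_j| ≥ 1 when m^(i) ≠ m^(j). -/
theorem separation_of_multisets
    (d N M : ℕ) (r δ : ℝ) (hr : 1 ≤ r) (hδ0 : 0 < δ) (hδ1 : δ ≤ 1)
    (m : Fin N → (EuclideanSpace ℝ (Fin d)) →₀ ℕ)
    (hdistinct : Function.Injective m)
    (hcard : ∀ i, ((m i).sum fun _ v => v) ≤ M)
    (hnorm : ∀ i, ∀ x ∈ (m i).support, ‖x‖ ≤ r)
    (hsep : ∀ i j, ∀ x ∈ (m i).support, ∀ y ∈ (m j).support, x = y ∨ δ ≤ ‖x - y‖) :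
    ∃ φ : EuclideanSpace ℝ (Fin d) → ℕ,
      (∀ x, φ x ≤ ⌈4 * (N : ℝ) ^ 3 * Real.sqrt π⌉₊) ∧
      {x | φ x ≠ 0}.Finite ∧ {x | φ x ≠ 0}.ncard ≤ N ∧
      (∀ i, |∑ x ∈ (m i).support, (m i x : ℝ) * φ x|
          ≤ 4 * M * (N : ℝ) ^ 3 * Real.sqrt π) ∧
      (∀ i j, m i ≠ m j →
        1 ≤ |(∑ x ∈ (m i).support, (m i x : ℝ) * φ x)
              - (∑ x ∈ (m j).support, (m j x : ℝ) * φ x)|) :=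
  separation_of_multisets_general d N M m hcard
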